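/- Let H be any graph and let f : ℕ → ℕ. Suppose that every (2K2, H)-free graph G' satisfies χ(G') ≤ f(ω(G')). Then every (2K2, K1+H)-free graph G with at least one edge satisfies χ(G) ≤ 2·f(ω(G) − 1) + 1. -/

import Mathlib

/-
Take a maximum clique and an edge `uv` inside it. The neighbourhoods of `u` and `v` induce
`(2K₂, H)`-free graphs (a copy of `H` next to `u` would give `K₁ + H`) whose clique number is
exactly `ω(G) − 1`, which matters because `f` need not be monotone; so each of them is
`f(ω(G) − 1)`-colourable. As `G` is `2K₂`-free, the vertices adjacent to neither `u` nor `v`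
form an independent set, which takes one more colour.
-/

open SimpleGraph

/-- `G` contains no induced subgraph isomorphic to `H` (graph embeddings are
exactly the inclusions of induced subgraphs). -/
def IndFree {W V : Type*} (H : SimpleGraph W) (G : SimpleGraph V) : Prop :=
  IsEmpty (H ↪g G)

/-- A set of vertices is independent if its elements are pairwise nonadjacent. -/
def IsIndep {V : Type*} (G : SimpleGraph V) (s : Set V) : Prop :=
  s.Pairwise fun u v => ¬ G.Adj u v

/-- A graph is perfect if every induced subgraph has chromatic number equal to
its clique number. -/
def IsPerfect {V : Type*} (G : SimpleGraph V) : Prop :=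
  ∀ S : Set V, (G.induce S).chromaticNumber = ((G.induce S).cliqueNum : ℕ∞)

/-- `2K₂`: two disjoint edges `{0,1}` and `{2,3}`. -/
def graph2K2 : SimpleGraph (Fin 4) :=
  SimpleGraph.fromRel (fun a b => (a = 0 ∧ b = 1) ∨ (a = 2 ∧ b = 3))

/-- The path `P₄`. -/
def graphP4 : SimpleGraph (Fin 4) :=
  SimpleGraph.fromRel (fun a b => (a = 0 ∧ b = 1) ∨ (a = 1 ∧ b = 2) ∨ (a = 2 ∧ b = 3))

/-- The path `P₃`. -/
def graphP3 : SimpleGraph (Fin 3) :=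
  SimpleGraph.fromRel (fun a b => (a = 0 ∧ b = 1) ∨ (a = 1 ∧ b = 2))

/-- `P₄ ∪ K₁`: a path on `{0,1,2,3}` plus the isolated vertex `4`. -/
def graphP4K1 : SimpleGraph (Fin 5) :=
  SimpleGraph.fromRel (fun a b => (a = 0 ∧ b = 1) ∨ (a = 1 ∧ b = 2) ∨ (a = 2 ∧ b = 3))

/-- The cycle `C₄`. -/
def graphC4 : SimpleGraph (Fin 4) :=
  SimpleGraph.fromRel
    (fun a b => (a = 0 ∧ b = 1) ∨ (a = 1 ∧ b = 2) ∨ (a = 2 ∧ b = 3) ∨ (a = 3 ∧ b = 0))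

/-- The gem `K₁ + P₄`: a path on `{0,1,2,3}` plus the universal vertex `4`. -/
def graphGem : SimpleGraph (Fin 5) :=
  SimpleGraph.fromRel
    (fun a b => (a = 0 ∧ b = 1) ∨ (a = 1 ∧ b = 2) ∨ (a = 2 ∧ b = 3) ∨ (a ≠ 4 ∧ b = 4))

/-- The wheel `K₁ + C₄`: a 4-cycle on `{0,1,2,3}` plus the universal vertex `4`. -/
def graphWheel : SimpleGraph (Fin 5) :=
  SimpleGraph.fromRel
    (fun a b => (a = 0 ∧ b = 1) ∨ (a = 1 ∧ b = 2) ∨ (a = 2 ∧ b = 3) ∨ (a = 3 ∧ b = 0) ∨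
      (a ≠ 4 ∧ b = 4))

/-- `P₂ ∪ P₃`: the edge `{0,1}` together with the path `2 - 3 - 4`. -/
def graphP2P3 : SimpleGraph (Fin 5) :=
  SimpleGraph.fromRel (fun a b => (a = 0 ∧ b = 1) ∨ (a = 2 ∧ b = 3) ∨ (a = 3 ∧ b = 4))

/-- `P₂ ∪ P₄`: the edge `{0,1}` together with the path `2 - 3 - 4 - 5`. -/
def graphP2P4 : SimpleGraph (Fin 6) :=
  SimpleGraph.fromRel
    (fun a b => (a = 0 ∧ b = 1) ∨ (a = 2 ∧ b = 3) ∨ (a = 3 ∧ b = 4) ∨ (a = 4 ∧ b = 5))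

/-- `HVN`: `K₄` on `{0,1,2,3}` plus a vertex `4` adjacent to exactly `0` and `1`. -/
def graphHVN : SimpleGraph (Fin 5) :=
  SimpleGraph.fromRel (fun a b => (a < 4 ∧ b < 4) ∨ (a = 4 ∧ (b = 0 ∨ b = 1)))

/-- `K₅ - e`: the complete graph on 5 vertices minus the edge `{0,1}`. -/
def graphK5e : SimpleGraph (Fin 5) :=
  SimpleGraph.fromRel (fun a b => ¬((a = 0 ∧ b = 1) ∨ (a = 1 ∧ b = 0)))

/-- The diamond `K₄ - e`: the complete graph on 4 vertices minus the edge `{0,2}`. -/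
def graphDiamond : SimpleGraph (Fin 4) :=
  SimpleGraph.fromRel (fun a b => ¬((a = 0 ∧ b = 2) ∨ (a = 2 ∧ b = 0)))

/-- The paw: a triangle `{0,1,2}` plus a pendant vertex `3` adjacent to `0`. -/
def graphPaw : SimpleGraph (Fin 4) :=
  SimpleGraph.fromRel
    (fun a b => (a = 0 ∧ b = 1) ∨ (a = 1 ∧ b = 2) ∨ (a = 0 ∧ b = 2) ∨ (a = 0 ∧ b = 3))

/-- `K₅`. -/
def graphK5 : SimpleGraph (Fin 5) := ⊤

/-- The join `K₁ + H`: `H` together with a new universal vertex `none`. -/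
def joinK1 {W : Type*} (H : SimpleGraph W) : SimpleGraph (Option W) :=
  SimpleGraph.fromRel
    (fun a b => (∃ u v, a = some u ∧ b = some v ∧ H.Adj u v) ∨ a = none)

/-- A pseudo-split graph is a `(2K₂, C₄)`-free graph. -/
def IsPseudoSplit {V : Type*} (G : SimpleGraph V) : Prop :=
  IndFree graph2K2 G ∧ IndFree graphC4 G

section

variable {V W : Type*} {G : SimpleGraph V} {H : SimpleGraph W}

@[simp]
lemma joinK1_adj_some_some {w w' : W} : (joinK1 H).Adj (some w) (some w') ↔ H.Adj w w' := by
  simp only [joinK1, fromRel_adj, Option.some.injEq, reduceCtorEq, or_false, ne_eq]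
  refine ⟨?_, fun h => ⟨h.ne, .inl ⟨w, w', rfl, rfl, h⟩⟩⟩
  rintro ⟨-, ⟨_, _, rfl, rfl, h⟩ | ⟨_, _, rfl, rfl, h⟩⟩
  exacts [h, h.symm]

@[simp]
lemma joinK1_adj_none_some {w : W} : (joinK1 H).Adj none (some w) := by
  simp [joinK1]

@[simp]
lemma joinK1_adj_some_none {w : W} : (joinK1 H).Adj (some w) none :=
  joinK1_adj_none_some.symm

namespace SimpleGraph

def Embedding.joinK1 (e : H ↪g G) (x : V) (hx : ∀ w, G.Adj x (e w)) : joinK1 H ↪g G where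
  toFun o := o.elim x e
  inj' := by
    rintro (_ | w) (_ | w') h
    · rfl
    · exact absurd h (hx w').ne
    · exact absurd h.symm (hx w).ne
    · exact congrArg some (e.injective h)
  map_rel_iff' := by
    rintro (_ | w) (_ | w') <;> simp only [Function.Embedding.coeFn_mk, Option.elim]
    · simp
    · simpa using hx w'
    · simpa using (hx w).symm
    · simp

lemma cliqueNum_induce_neighborSet_add_one_le [Finite V] (x : V) :
    (G.induce (G.neighborSet x)).cliqueNum + 1 ≤ G.cliqueNum := by
  classical
  obtain ⟨t, ht⟩ := (G.induce (G.neighborSet x)).exists_isNClique_cliqueNum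
  rw [isNClique_induce_iff] at ht
  have hx : G.IsNClique _ (insert x (t.map (.subtype _))) :=
    ht.insert fun y hy => by
      obtain ⟨y, -, rfl⟩ := Finset.mem_map.mp hy
      exact y.2
  exact hx.card_eq ▸ hx.isClique.card_le_cliqueNum

lemma IsNClique.cliqueNum_induce_neighborSet [Finite V] {K : Finset V}
    (hK : G.IsNClique G.cliqueNum K) {x : V} (hx : x ∈ K) :
    (G.induce (G.neighborSet x)).cliqueNum = G.cliqueNum - 1 := by
  classical
  refine le_antisymm (Nat.le_sub_one_of_lt (cliqueNum_induce_neighborSet_add_one_le x)) ?_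
  have hsub : ∀ y ∈ K.erase x, y ∈ G.neighborSet x := fun y hy =>
    hK.isClique hx (Finset.mem_of_mem_erase hy) (Finset.ne_of_mem_erase hy).symm
  have hK' :
      (G.induce (G.neighborSet x)).IsNClique (G.cliqueNum - 1) ((K.erase x).subtype _) := by
    rw [isNClique_induce_iff, Finset.subtype_map_of_mem hsub]
    exact hK.erase_of_mem hx
  exact hK'.card_eq ▸ hK'.isClique.card_le_cliqueNum

lemma IsNClique.exists_adj_of_adj [Finite V] {K : Finset V} (hK : G.IsNClique G.cliqueNum K)
    {a b : V} (hab : G.Adj a b) : ∃ u ∈ K, ∃ v ∈ K, G.Adj u v := by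
  classical
  have h2 : 1 < K.card := by
    have := IsClique.card_le_cliqueNum (t := {a, b})
      (tc := Finset.coe_pair (a := a) (b := b) ▸ isClique_pair.mpr fun _ => hab)
    rw [Finset.card_pair hab.ne] at this
    rw [hK.card_eq]
    omega
  obtain ⟨u, hu, v, hv, huv⟩ := Finset.one_lt_card.mp h2
  exact ⟨u, hu, v, hv, hK.isClique hu hv huv⟩

lemma Colorable.induce_union {s t : Set V} {m n : ℕ} (hs : (G.induce s).Colorable m)
    (ht : (G.induce t).Colorable n) : (G.induce (s ∪ t)).Colorable (m + n) := by
  classical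
  obtain ⟨Cs⟩ := hs
  obtain ⟨Ct⟩ := ht
  let c : ↥(s ∪ t) → Fin m ⊕ Fin n := fun x =>
    if hx : x.1 ∈ s then .inl (Cs ⟨x, hx⟩) else .inr (Ct ⟨x, x.2.resolve_left hx⟩)
  have hc : ∀ {x y}, (G.induce (s ∪ t)).Adj x y → c x ≠ c y := by
    intro x y hxy
    simp only [c]
    split_ifs with hx hy hy
    · exact fun h => Cs.valid (v := ⟨x, hx⟩) (w := ⟨y, hy⟩) hxy (Sum.inl_injective h)
    · exact Sum.inl_ne_inr
    · exact Sum.inr_ne_inl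
    · exact fun h => Ct.valid (v := ⟨x, _⟩) (w := ⟨y, _⟩) hxy (Sum.inr_injective h)
  simpa using (Coloring.mk c hc).colorable

end SimpleGraph

lemma IndFree.induce {X : SimpleGraph W} (h : IndFree X G) (s : Set V) :
    IndFree X (G.induce s) :=
  ⟨fun e => h.false ((Embedding.induce s).comp e)⟩

lemma IndFree.induce_neighborSet (h : IndFree (joinK1 H) G) (x : V) :
    IndFree H (G.induce (G.neighborSet x)) :=
  ⟨fun e => h.false (((Embedding.induce _).comp e).joinK1 x fun w => (e w).2)⟩

lemma IndFree.not_adj_of_graph2K2 (h : IndFree graph2K2 G) {u v a b : V} (huv : G.Adj u v)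
    (hua : ¬G.Adj u a) (hub : ¬G.Adj u b) (hva : ¬G.Adj v a) (hvb : ¬G.Adj v b) :
    ¬G.Adj a b := by
  intro hab
  have hua' : u ≠ a := fun h => hva (h ▸ huv.symm)
  have hub' : u ≠ b := fun h => hvb (h ▸ huv.symm)
  have hva' : v ≠ a := fun h => hua (h ▸ huv)
  have hvb' : v ≠ b := fun h => hub (h ▸ huv)
  refine h.false ⟨⟨![u, v, a, b], ?_⟩, ?_⟩
  · intro i j hij
    fin_cases i <;> fin_cases j <;> simp_all [huv.ne, hab.ne, Ne.symm]
  · intro i j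
    change G.Adj (![u, v, a, b] i) (![u, v, a, b] j) ↔ graph2K2.Adj i j
    fin_cases i <;> fin_cases j <;>
      simp_all [graph2K2, fromRel_adj, huv.symm, hab.symm, G.adj_comm a u, G.adj_comm b u,
        G.adj_comm a v, G.adj_comm b v]

lemma IndFree.induce_compl_neighborSet_union_eq_bot (h : IndFree graph2K2 G) {u v : V}
    (huv : G.Adj u v) : G.induce (G.neighborSet u ∪ G.neighborSet v)ᶜ = ⊥ := by
  ext ⟨a, ha⟩ ⟨b, hb⟩
  simp only [Set.mem_compl_iff, Set.mem_union, mem_neighborSet, not_or] at ha hb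
  simpa using h.not_adj_of_graph2K2 huv ha.1 hb.1 ha.2 hb.2

lemma IndFree.colorable_of_graph2K2 (h : IndFree graph2K2 G) {u v : V} (huv : G.Adj u v)
    {m n : ℕ} (hu : (G.induce (G.neighborSet u)).Colorable m)
    (hv : (G.induce (G.neighborSet v)).Colorable n) : G.Colorable (m + n + 1) := by
  have hrest := colorable_one_iff.mpr (h.induce_compl_neighborSet_union_eq_bot huv)
  have hcol := (hu.induce_union hv).induce_union hrest
  rw [Set.union_compl_self] at hcol
  exact (colorable_congr (induceUnivIso G)).mp hcol

end

universe u v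

/-- If every `(2K₂, H)`-free graph `G'` satisfies `χ(G') ≤ f(ω(G'))`,
then every `(2K₂, K₁ + H)`-free graph `G` with at least one edge satisfies
`χ(G) ≤ 2·f(ω(G) − 1) + 1`. -/
theorem stmt10 {W : Type v} (H : SimpleGraph W) (f : ℕ → ℕ)
    (hf : ∀ (V' : Type u) [Fintype V'] (G' : SimpleGraph V'),
      IndFree graph2K2 G' → IndFree H G' →
        G'.chromaticNumber ≤ ((f G'.cliqueNum : ℕ) : ℕ∞))
    {V : Type u} [Fintype V] (G : SimpleGraph V)
    (h1 : IndFree graph2K2 G) (h2 : IndFree (joinK1 H) G)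
    (he : ∃ u w : V, G.Adj u w) :
    G.chromaticNumber ≤ ((2 * f (G.cliqueNum - 1) + 1 : ℕ) : ℕ∞) := by
  classical
  obtain ⟨K, hK⟩ := G.exists_isNClique_cliqueNum
  obtain ⟨a, b, hab⟩ := he
  obtain ⟨u, hu, v, hv, huv⟩ := hK.exists_adj_of_adj hab
  have hcol : ∀ x ∈ K, (G.induce (G.neighborSet x)).Colorable (f (G.cliqueNum - 1)) := by
    intro x hx
    rw [← hK.cliqueNum_induce_neighborSet hx, ← chromaticNumber_le_iff_colorable]
    exact hf _ _ (h1.induce _) (h2.induce_neighborSet x)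
  rw [chromaticNumber_le_iff_colorable, two_mul]
  exact h1.colorable_of_graph2K2 huv (hcol u hu) (hcol v hv)
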